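/- With h, M, N as in the context, assume a = b, b ≠ 0, c ≠ 0, and χ = c·B + b·(A − C − 2k³) ≠ 0. Then the origin is an isolated umbilic point: there exists a neighborhood U of (0,0) in ℝ² such that the only point (u,v) ∈ U with M(u,v) = 0 and N(u,v) = 0 is (u,v) = (0,0). -/

import Mathlib

open Asymptotics Filter Topology

noncomputable section

/-- The Monge chart `h` at an umbilic point (coefficient of `u²v` normalized to 0). -/
def hFun (k a b c A B C D E u v : ℝ) : ℝ :=
  k / 2 * (u ^ 2 + v ^ 2) + a / 6 * u ^ 3 + b / 2 * u * v ^ 2 + c / 6 * v ^ 3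
    + A / 24 * u ^ 4 + B / 6 * u ^ 3 * v + C / 4 * u ^ 2 * v ^ 2
    + D / 6 * u * v ^ 3 + E / 24 * v ^ 4

/-- Partial derivative `h_u`. -/
def h_u (k a b c A B C D E u v : ℝ) : ℝ := deriv (fun x => hFun k a b c A B C D E x v) u

/-- Partial derivative `h_v`. -/
def h_v (k a b c A B C D E u v : ℝ) : ℝ := deriv (fun y => hFun k a b c A B C D E u y) v

/-- Partial derivative `h_uu`. -/
def h_uu (k a b c A B C D E u v : ℝ) : ℝ := deriv (fun x => h_u k a b c A B C D E x v) u

/-- Partial derivative `h_uv`. -/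
def h_uv (k a b c A B C D E u v : ℝ) : ℝ := deriv (fun y => h_u k a b c A B C D E u y) v

/-- Partial derivative `h_vv`. -/
def h_vv (k a b c A B C D E u v : ℝ) : ℝ := deriv (fun y => h_v k a b c A B C D E u y) v

/-- Coefficient `L = h_u h_v h_vv − (1+h_v²) h_uv` of the principal-line equation. -/
def eqL (k a b c A B C D E u v : ℝ) : ℝ :=
  h_u k a b c A B C D E u v * h_v k a b c A B C D E u v * h_vv k a b c A B C D E u v
    - (1 + h_v k a b c A B C D E u v ^ 2) * h_uv k a b c A B C D E u v

/-- Coefficient `M = (1+h_u²) h_vv − (1+h_v²) h_uu` of the principal-line equation. -/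
def eqM (k a b c A B C D E u v : ℝ) : ℝ :=
  (1 + h_u k a b c A B C D E u v ^ 2) * h_vv k a b c A B C D E u v
    - (1 + h_v k a b c A B C D E u v ^ 2) * h_uu k a b c A B C D E u v

/-- Coefficient `N = (1+h_u²) h_uv − h_u h_v h_uu` of the principal-line equation. -/
def eqN (k a b c A B C D E u v : ℝ) : ℝ :=
  (1 + h_u k a b c A B C D E u v ^ 2) * h_uv k a b c A B C D E u v
    - h_u k a b c A B C D E u v * h_v k a b c A B C D E u v * h_uu k a b c A B C D E u v

/-- `T(u,v,p) = L p² + M p + N`, the lifted principal-line equation. -/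
def eqT (k a b c A B C D E u v p : ℝ) : ℝ :=
  eqL k a b c A B C D E u v * p ^ 2 + eqM k a b c A B C D E u v * p + eqN k a b c A B C D E u v

/-- Partial derivative `T_u`. -/
def eqT_u (k a b c A B C D E u v p : ℝ) : ℝ := deriv (fun x => eqT k a b c A B C D E x v p) u

/-- Partial derivative `T_v`. -/
def eqT_v (k a b c A B C D E u v p : ℝ) : ℝ := deriv (fun y => eqT k a b c A B C D E u y p) v

/-- Partial derivative `T_p`. -/
def eqT_p (k a b c A B C D E u v p : ℝ) : ℝ := deriv (fun q => eqT k a b c A B C D E u v q) p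

/-- The Lie–Cartan vector field `X(u,v,p) = (T_p, p T_p, −(T_u + p T_v))` on `ℝ³ = ℝ×ℝ×ℝ`. -/
def lieCartan (k a b c A B C D E : ℝ) (w : ℝ × ℝ × ℝ) : ℝ × ℝ × ℝ :=
  (eqT_p k a b c A B C D E w.1 w.2.1 w.2.2,
   w.2.2 * eqT_p k a b c A B C D E w.1 w.2.1 w.2.2,
   -(eqT_u k a b c A B C D E w.1 w.2.1 w.2.2 + w.2.2 * eqT_v k a b c A B C D E w.1 w.2.1 w.2.2))

/-- The Lie–Cartan vector field, as a map `(Fin 3 → ℝ) → (Fin 3 → ℝ)`. -/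
def lieCartan3 (k a b c A B C D E : ℝ) (w : Fin 3 → ℝ) : Fin 3 → ℝ :=
  ![eqT_p k a b c A B C D E (w 0) (w 1) (w 2),
    w 2 * eqT_p k a b c A B C D E (w 0) (w 1) (w 2),
    -(eqT_u k a b c A B C D E (w 0) (w 1) (w 2)
        + w 2 * eqT_v k a b c A B C D E (w 0) (w 1) (w 2))]

set_option maxHeartbeats 2000000
set_option maxRecDepth 10000
set_option linter.unusedVariables false

lemma deriv_quartic (c0 c1 c2 c3 c4 u : ℝ) :
    deriv (fun x : ℝ => c0 + c1 * x + c2 * x ^ 2 + c3 * x ^ 3 + c4 * x ^ 4) u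
      = c1 + 2 * c2 * u + 3 * c3 * u ^ 2 + 4 * c4 * u ^ 3 := by
  have H : HasDerivAt (fun x : ℝ => c0 + c1 * x + c2 * x ^ 2 + c3 * x ^ 3 + c4 * x ^ 4)
      (c1 + 2 * c2 * u + 3 * c3 * u ^ 2 + 4 * c4 * u ^ 3) u := by
    have h0 := hasDerivAt_const u c0
    have h1 := (hasDerivAt_id u).const_mul c1
    have h2 := (hasDerivAt_pow 2 u).const_mul c2
    have h3 := (hasDerivAt_pow 3 u).const_mul c3
    have h4 := (hasDerivAt_pow 4 u).const_mul c4
    have := (((h0.add h1).add h2).add h3).add h4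
    refine (this.congr_deriv (by push_cast; ring)).congr_of_eventuallyEq
      (Filter.Eventually.of_forall fun x => ?_)
    simp only [Pi.add_apply, id]
  exact H.deriv

lemma h_u_eq (k a b c A B C D E u v : ℝ) :
    h_u k a b c A B C D E u v
      = k * u + a / 2 * u ^ 2 + b / 2 * v ^ 2 + A / 6 * u ^ 3 + B / 2 * u ^ 2 * v
        + C / 2 * u * v ^ 2 + D / 6 * v ^ 3 := by
  unfold h_u hFun
  rw [show (fun x : ℝ => k / 2 * (x ^ 2 + v ^ 2) + a / 6 * x ^ 3 + b / 2 * x * v ^ 2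
        + c / 6 * v ^ 3 + A / 24 * x ^ 4 + B / 6 * x ^ 3 * v + C / 4 * x ^ 2 * v ^ 2
        + D / 6 * x * v ^ 3 + E / 24 * v ^ 4)
      = (fun x : ℝ => (k / 2 * v ^ 2 + c / 6 * v ^ 3 + E / 24 * v ^ 4)
        + (b / 2 * v ^ 2 + D / 6 * v ^ 3) * x + (k / 2 + C / 4 * v ^ 2) * x ^ 2
        + (a / 6 + B / 6 * v) * x ^ 3 + (A / 24) * x ^ 4) from funext fun x => by ring,
    deriv_quartic]
  ring

lemma h_v_eq (k a b c A B C D E u v : ℝ) :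
    h_v k a b c A B C D E u v
      = k * v + b * u * v + c / 2 * v ^ 2 + B / 6 * u ^ 3 + C / 2 * u ^ 2 * v
        + D / 2 * u * v ^ 2 + E / 6 * v ^ 3 := by
  unfold h_v hFun
  rw [show (fun y : ℝ => k / 2 * (u ^ 2 + y ^ 2) + a / 6 * u ^ 3 + b / 2 * u * y ^ 2
        + c / 6 * y ^ 3 + A / 24 * u ^ 4 + B / 6 * u ^ 3 * y + C / 4 * u ^ 2 * y ^ 2
        + D / 6 * u * y ^ 3 + E / 24 * y ^ 4)
      = (fun y : ℝ => (k / 2 * u ^ 2 + a / 6 * u ^ 3 + A / 24 * u ^ 4)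
        + (B / 6 * u ^ 3) * y + (k / 2 + b / 2 * u + C / 4 * u ^ 2) * y ^ 2
        + (c / 6 + D / 6 * u) * y ^ 3 + (E / 24) * y ^ 4) from funext fun y => by ring,
    deriv_quartic]
  ring

lemma h_uu_eq (k a b c A B C D E u v : ℝ) :
    h_uu k a b c A B C D E u v
      = k + a * u + A / 2 * u ^ 2 + B * u * v + C / 2 * v ^ 2 := by
  unfold h_uu
  rw [show (fun x : ℝ => h_u k a b c A B C D E x v)
      = (fun x : ℝ => (b / 2 * v ^ 2 + D / 6 * v ^ 3) + (k + C / 2 * v ^ 2) * x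
        + (a / 2 + B / 2 * v) * x ^ 2 + (A / 6) * x ^ 3 + (0 : ℝ) * x ^ 4)
      from funext fun x => by rw [h_u_eq]; ring, deriv_quartic]
  ring

lemma h_uv_eq (k a b c A B C D E u v : ℝ) :
    h_uv k a b c A B C D E u v
      = b * v + B / 2 * u ^ 2 + C * u * v + D / 2 * v ^ 2 := by
  unfold h_uv
  rw [show (fun y : ℝ => h_u k a b c A B C D E u y)
      = (fun y : ℝ => (k * u + a / 2 * u ^ 2 + A / 6 * u ^ 3) + (B / 2 * u ^ 2) * y
        + (b / 2 + C / 2 * u) * y ^ 2 + (D / 6) * y ^ 3 + (0 : ℝ) * y ^ 4)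
      from funext fun y => by rw [h_u_eq]; ring, deriv_quartic]
  ring

lemma h_vv_eq (k a b c A B C D E u v : ℝ) :
    h_vv k a b c A B C D E u v
      = k + b * u + c * v + C / 2 * u ^ 2 + D * u * v + E / 2 * v ^ 2 := by
  unfold h_vv
  rw [show (fun y : ℝ => h_v k a b c A B C D E u y)
      = (fun y : ℝ => (B / 6 * u ^ 3) + (k + b * u + C / 2 * u ^ 2) * y
        + (c / 2 + D / 2 * u) * y ^ 2 + (E / 6) * y ^ 3 + (0 : ℝ) * y ^ 4)
      from funext fun y => by rw [h_v_eq]; ring, deriv_quartic]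
  ring

def RN2 (k b c A B C D E u v : ℝ) : ℝ :=
  ((1/2:ℝ)*B + (1/3:ℝ)*k^2*B*u^2 + (1/4:ℝ)*k*b*B*u^3 + (1/24:ℝ)*b^2*B*u^4 + (1/18:ℝ)*k*A*B*u^4 + (1/72:ℝ)*b*A*B*u^5)

def RN1 (k b c A B C D E u v : ℝ) : ℝ :=
  ((1:ℝ)*C + (-1:ℝ)*k^3 + (-3/2:ℝ)*k^2*b*u + (-1:ℝ)*k*b^2*u^2 + (1/2:ℝ)*k^2*C*u^2 + (-2/3:ℝ)*k^2*A*u^2 + (-1/4:ℝ)*b^3*u^3 + (1/4:ℝ)*k*b*C*u^3 + (-3/4:ℝ)*k*b*A*u^3 + (-1/4:ℝ)*b^2*A*u^4)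
  + ((1/4:ℝ)*k*B^2*u^4 + (-1/12:ℝ)*k*A^2*u^4 + (1/12:ℝ)*b*B^2*u^5 + (-1/24:ℝ)*b*A*C*u^5 + (-1/18:ℝ)*b*A^2*u^5 + (1/72:ℝ)*A*B^2*u^6 + (-1/72:ℝ)*A^2*C*u^6)

def RN0 (k b c A B C D E u v : ℝ) : ℝ :=
  ((1/2:ℝ)*D + (-1/2:ℝ)*k^2*b*v + (-1/4:ℝ)*k*b*c*v^2 + (-1/6:ℝ)*k^2*D*v^2 + (1/4:ℝ)*b^3*v^3 + (-1/12:ℝ)*k*c*D*v^3 + (-1/12:ℝ)*k*b*E*v^3 + (-1/4:ℝ)*k*b*C*v^3 + (-1/8:ℝ)*b*c*C*v^4 + (7/24:ℝ)*b^2*D*v^4)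
  + ((-1/36:ℝ)*k*D*E*v^4 + (-1/12:ℝ)*k*C*D*v^4 + (-1/24:ℝ)*c*C*D*v^5 + (1/9:ℝ)*b*D^2*v^5 + (-1/24:ℝ)*b*C*E*v^5 + (1/72:ℝ)*D^3*v^6 + (-1/72:ℝ)*C*D*E*v^6 + (-1/2:ℝ)*k^2*c*u + (-1/6:ℝ)*k^2*E*u*v + (-1:ℝ)*k^2*C*u*v)
  + ((-1/4:ℝ)*b^2*c*u*v^2 + (-1/2:ℝ)*k*c*C*u*v^2 + (1/4:ℝ)*k*b*D*u*v^2 + (-1/2:ℝ)*k*b*B*u*v^2 + (-1/12:ℝ)*b*c*D*u*v^3 + (-1/4:ℝ)*b*c*B*u*v^3 + (-1/12:ℝ)*b^2*E*u*v^3 + (1/2:ℝ)*b^2*C*u*v^3 + (1/12:ℝ)*k*D^2*u*v^3 + (-1/6:ℝ)*k*C*E*u*v^3)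
  + ((-1/4:ℝ)*k*C^2*u*v^3 + (-1/6:ℝ)*k*B*D*u*v^3 + (-1/8:ℝ)*c*C^2*u*v^4 + (-1/12:ℝ)*c*B*D*u*v^4 + (-1/36:ℝ)*b*D*E*u*v^4 + (3/8:ℝ)*b*C*D*u*v^4 + (-1/12:ℝ)*b*B*E*u*v^4 + (5/72:ℝ)*C*D^2*u*v^5 + (-1/24:ℝ)*C^2*E*u*v^5 + (-1/36:ℝ)*B*D*E*u*v^5)
  + ((-3/4:ℝ)*k*b*c*u^2 + (-3/2:ℝ)*k^2*B*u^2 + (-3/4:ℝ)*k*c*B*u^2*v + (-1/4:ℝ)*k*b*E*u^2*v + (-1/4:ℝ)*k*b*A*u^2*v + (-3/8:ℝ)*b*c*C*u^2*v^2 + (-1/8:ℝ)*b*c*A*u^2*v^2 + (1/8:ℝ)*b^2*B*u^2*v^2 + (1/4:ℝ)*k*C*D*u^2*v^2 + (-1/4:ℝ)*k*B*E*u^2*v^2)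
  + ((-3/4:ℝ)*k*B*C*u^2*v^2 + (-1/12:ℝ)*k*A*D*u^2*v^2 + (-3/8:ℝ)*c*B*C*u^2*v^3 + (-1/24:ℝ)*c*A*D*u^2*v^3 + (-1/8:ℝ)*b*C*E*u^2*v^3 + (3/8:ℝ)*b*C^2*u^2*v^3 + (1/12:ℝ)*b*B*D*u^2*v^3 + (-1/24:ℝ)*b*A*E*u^2*v^3 + (1/8:ℝ)*C^2*D*u^2*v^4 + (1/72:ℝ)*B*D^2*u^2*v^4)
  + ((-1/8:ℝ)*B*C*E*u^2*v^4 + (-1/72:ℝ)*A*D*E*u^2*v^4 + (-1/4:ℝ)*b^2*c*u^3 + (-1/3:ℝ)*k*c*A*u^3 + (-1/4:ℝ)*k*b*D*u^3 + (-13/12:ℝ)*k*b*B*u^3 + (-1/2:ℝ)*b*c*B*u^3*v + (-1/12:ℝ)*b^2*E*u^3*v + (-1/12:ℝ)*b^2*A*u^3*v + (1/2:ℝ)*k*C^2*u^3*v)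
  + ((-1/9:ℝ)*k*B*D*u^3*v + (-1/2:ℝ)*k*B^2*u^3*v + (-1/9:ℝ)*k*A*E*u^3*v + (-1/3:ℝ)*k*A*C*u^3*v + (-1/4:ℝ)*c*B^2*u^3*v^2 + (-1/6:ℝ)*c*A*C*u^3*v^2 + (-1/24:ℝ)*b*C*D*u^3*v^2 + (-1/6:ℝ)*b*B*E*u^3*v^2 + (5/24:ℝ)*b*B*C*u^3*v^2 + (-5/72:ℝ)*b*A*D*u^3*v^2)
  + ((1/8:ℝ)*C^3*u^3*v^3 + (1/36:ℝ)*B*C*D*u^3*v^3 + (-1/12:ℝ)*B^2*E*u^3*v^3 + (-1/72:ℝ)*A*D^2*u^3*v^3 + (-1/18:ℝ)*A*C*E*u^3*v^3 + (-5/24:ℝ)*b*c*A*u^4 + (-1/8:ℝ)*b^2*D*u^4 + (-1/3:ℝ)*b^2*B*u^4 + (7/12:ℝ)*k*B*C*u^4 + (-1/6:ℝ)*k*A*D*u^4)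
  + ((-5/12:ℝ)*k*A*B*u^4 + (-5/24:ℝ)*c*A*B*u^4*v + (1/8:ℝ)*b*C^2*u^4*v + (-7/36:ℝ)*b*B*D*u^4*v + (-1/12:ℝ)*b*B^2*u^4*v + (-5/72:ℝ)*b*A*E*u^4*v + (-1/8:ℝ)*b*A*C*u^4*v + (5/24:ℝ)*B*C^2*u^4*v^2 + (-5/72:ℝ)*B^2*D*u^4*v^2 + (-5/72:ℝ)*A*C*D*u^4*v^2)
  + ((-5/72:ℝ)*A*B*E*u^4*v^2 + (-1/24:ℝ)*c*A^2*u^5 + (1/8:ℝ)*b*B*C*u^5 + (-1/8:ℝ)*b*A*D*u^5 + (-5/24:ℝ)*b*A*B*u^5 + (1/8:ℝ)*B^2*C*u^5*v + (-1/9:ℝ)*A*B*D*u^5*v + (-1/72:ℝ)*A^2*E*u^5*v + (1/24:ℝ)*B^3*u^6 + (-1/72:ℝ)*A*B*C*u^6)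
  + ((-1/36:ℝ)*A^2*D*u^6)

def RG3 (k b c A B C D E u v : ℝ) : ℝ :=
  ((-2:ℝ)*k^2*b^2 + (-5/4:ℝ)*k*b^3*u + (1/3:ℝ)*k^2*c*B*u + (-1/2:ℝ)*k^2*b*C*u + (-1/3:ℝ)*k^2*b*A*u + (-1/4:ℝ)*b^4*u^2 + (1/4:ℝ)*k*b*c*B*u^2 + (-1/2:ℝ)*k*b^2*C*u^2 + (-1/2:ℝ)*k*b^2*A*u^2 + (1/24:ℝ)*b^2*c*B*u^3)
  + ((-1/8:ℝ)*b^3*C*u^3 + (-1/6:ℝ)*b^3*A*u^3 + (1/18:ℝ)*k*c*A*B*u^3 + (1/36:ℝ)*k*b*B^2*u^3 + (-1/6:ℝ)*k*b*A*C*u^3 + (-1/36:ℝ)*k*b*A^2*u^3 + (1/72:ℝ)*b*c*A*B*u^4 + (1/36:ℝ)*b^2*B^2*u^4 + (-1/12:ℝ)*b^2*A*C*u^4 + (-1/36:ℝ)*b^2*A^2*u^4)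
  + ((1/72:ℝ)*b*A*B^2*u^5 + (-1/72:ℝ)*b*A^2*C*u^5)

def RG1 (k b c A B C D E u v : ℝ) : ℝ :=
  ((1:ℝ)*c*C + (-1:ℝ)*b*D + (1:ℝ)*b*B + (-1:ℝ)*k^3*c + (-5/2:ℝ)*k^2*b*c*u + (-2:ℝ)*k*b^2*c*u^2 + (1/2:ℝ)*k^2*c*C*u^2 + (-2/3:ℝ)*k^2*c*A*u^2 + (-1:ℝ)*k^2*b*D*u^2 + (-2/3:ℝ)*k^2*b*B*u^2)
  + ((-1/2:ℝ)*b^3*c*u^3 + (1/4:ℝ)*k*b*c*C*u^3 + (-13/12:ℝ)*k*b*c*A*u^3 + (-1:ℝ)*k*b^2*D*u^3 + (-5/6:ℝ)*k*b^2*B*u^3 + (-5/12:ℝ)*b^2*c*A*u^4 + (-1/4:ℝ)*b^3*D*u^4 + (-1/6:ℝ)*b^3*B*u^4 + (1/4:ℝ)*k*c*B^2*u^4 + (-1/12:ℝ)*k*c*A^2*u^4)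
  + ((-1/3:ℝ)*k*b*B*C*u^4 + (-1/3:ℝ)*k*b*A*D*u^4 + (1/12:ℝ)*b*c*B^2*u^5 + (-1/24:ℝ)*b*c*A*C*u^5 + (-1/12:ℝ)*b*c*A^2*u^5 + (-1/12:ℝ)*b^2*B*C*u^5 + (-1/6:ℝ)*b^2*A*D*u^5 + (1/72:ℝ)*c*A*B^2*u^6 + (-1/72:ℝ)*c*A^2*C*u^6 + (1/36:ℝ)*b*B^3*u^6)
  + ((-1/36:ℝ)*b*A^2*D*u^6)

def RG0 (k b c A B C D E u v : ℝ) : ℝ :=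
  ((1/2:ℝ)*c*D + (-1/2:ℝ)*b*E + (1/2:ℝ)*b*C + (1:ℝ)*k^3*b + (1/2:ℝ)*k^2*b*c*v + (-1/4:ℝ)*k*b^3*v^2 + (-1/6:ℝ)*k^2*c*D*v^2 + (1/3:ℝ)*k^2*b*E*v^2 + (1/2:ℝ)*k^2*b*C*v^2 + (-1/12:ℝ)*k*c^2*D*v^3)
  + ((1/12:ℝ)*k*b*c*E*v^3 + (1/4:ℝ)*k*b*c*C*v^3 + (-1/6:ℝ)*k*b^2*D*v^3 + (1/8:ℝ)*b^2*c*D*v^4 + (-1/8:ℝ)*b^3*E*v^4 + (-1/36:ℝ)*k*c*D*E*v^4 + (-1/12:ℝ)*k*c*C*D*v^4 + (1/36:ℝ)*k*b*E^2*v^4 + (-1/36:ℝ)*k*b*D^2*v^4 + (1/6:ℝ)*k*b*C*E*v^4)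
  + ((-1/24:ℝ)*c^2*C*D*v^5 + (1/12:ℝ)*b*c*D^2*v^5 + (1/24:ℝ)*b*c*C*E*v^5 + (-1/12:ℝ)*b^2*D*E*v^5 + (1/72:ℝ)*c*D^3*v^6 + (-1/72:ℝ)*c*C*D*E*v^6 + (-1/72:ℝ)*b*D^2*E*v^6 + (1/72:ℝ)*b*C*E^2*v^6 + (-1/2:ℝ)*k^2*c^2*u + (2:ℝ)*k^2*b^2*u)
  + ((1:ℝ)*k*b^2*c*u*v + (-1/6:ℝ)*k^2*c*E*u*v + (-1:ℝ)*k^2*c*C*u*v + (2/3:ℝ)*k^2*b*D*u*v + (1:ℝ)*k^2*b*B*u*v + (-1/4:ℝ)*b^4*u*v^2 + (-1/2:ℝ)*k*c^2*C*u*v^2 + (5/12:ℝ)*k*b*c*D*u*v^2 + (1/2:ℝ)*k*b*c*B*u*v^2 + (1/6:ℝ)*k*b^2*E*u*v^2)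
  + ((1/2:ℝ)*k*b^2*C*u*v^2 + (-1/12:ℝ)*b*c^2*D*u*v^3 + (1/12:ℝ)*b^2*c*E*u*v^3 + (1/2:ℝ)*b^2*c*C*u*v^3 + (-5/12:ℝ)*b^3*D*u*v^3 + (1/12:ℝ)*k*c*D^2*u*v^3 + (-1/6:ℝ)*k*c*C*E*u*v^3 + (-1/4:ℝ)*k*c*C^2*u*v^3 + (-1/6:ℝ)*k*c*B*D*u*v^3 + (1/3:ℝ)*k*b*C*D*u*v^3)
  + ((1/3:ℝ)*k*b*B*E*u*v^3 + (-1/8:ℝ)*c^2*C^2*u*v^4 + (-1/12:ℝ)*c^2*B*D*u*v^4 + (-1/36:ℝ)*b*c*D*E*u*v^4 + (11/24:ℝ)*b*c*C*D*u*v^4 + (1/12:ℝ)*b*c*B*E*u*v^4 + (1/36:ℝ)*b^2*E^2*u*v^4 + (-7/36:ℝ)*b^2*D^2*u*v^4 + (-1/12:ℝ)*b^2*C*E*u*v^4 + (5/72:ℝ)*c*C*D^2*u*v^5)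
  + ((-1/24:ℝ)*c*C^2*E*u*v^5 + (-1/36:ℝ)*c*B*D*E*u*v^5 + (-1/36:ℝ)*b*D^3*u*v^5 + (1/36:ℝ)*b*B*E^2*u*v^5 + (-3/4:ℝ)*k*b*c^2*u^2 + (3/2:ℝ)*k*b^3*u^2 + (-3/2:ℝ)*k^2*c*B*u^2 + (-1/2:ℝ)*k^2*b*E*u^2 + (1/2:ℝ)*k^2*b*A*u^2 + (1/2:ℝ)*b^3*c*u^2*v)
  + ((-3/4:ℝ)*k*c^2*B*u^2*v + (-1/4:ℝ)*k*b*c*E*u^2*v + (-1/2:ℝ)*k*b*c*C*u^2*v + (1/4:ℝ)*k*b*c*A*u^2*v + (1/2:ℝ)*k*b^2*D*u^2*v + (3/2:ℝ)*k*b^2*B*u^2*v + (-3/8:ℝ)*b*c^2*C*u^2*v^2 + (1/3:ℝ)*b^2*c*D*u^2*v^2 + (5/8:ℝ)*b^2*c*B*u^2*v^2 + (1/12:ℝ)*b^3*E*u^2*v^2)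
  + ((-1/8:ℝ)*b^3*C*u^2*v^2 + (1/4:ℝ)*k*c*C*D*u^2*v^2 + (-1/4:ℝ)*k*c*B*E*u^2*v^2 + (-3/4:ℝ)*k*c*B*C*u^2*v^2 + (-1/12:ℝ)*k*c*A*D*u^2*v^2 + (-1/12:ℝ)*k*b*D^2*u^2*v^2 + (-1/3:ℝ)*k*b*C*E*u^2*v^2 + (1/4:ℝ)*k*b*C^2*u^2*v^2 + (5/6:ℝ)*k*b*B*D*u^2*v^2 + (1/6:ℝ)*k*b*A*E*u^2*v^2)
  + ((-3/8:ℝ)*c^2*B*C*u^2*v^3 + (-1/24:ℝ)*c^2*A*D*u^2*v^3 + (-1/8:ℝ)*b*c*C*E*u^2*v^3 + (3/8:ℝ)*b*c*C^2*u^2*v^3 + (5/12:ℝ)*b*c*B*D*u^2*v^3 + (1/24:ℝ)*b*c*A*E*u^2*v^3 + (1/12:ℝ)*b^2*D*E*u^2*v^3 + (-1/4:ℝ)*b^2*C*D*u^2*v^3 + (1/12:ℝ)*b^2*B*E*u^2*v^3 + (1/8:ℝ)*c*C^2*D*u^2*v^4)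
  + ((1/72:ℝ)*c*B*D^2*u^2*v^4 + (-1/8:ℝ)*c*B*C*E*u^2*v^4 + (-1/72:ℝ)*c*A*D*E*u^2*v^4 + (-1/18:ℝ)*b*C*D^2*u^2*v^4 + (-1/24:ℝ)*b*C^2*E*u^2*v^4 + (1/12:ℝ)*b*B*D*E*u^2*v^4 + (1/72:ℝ)*b*A*E^2*u^2*v^4 + (-1/4:ℝ)*b^2*c^2*u^3 + (1/2:ℝ)*b^4*u^3 + (-1/3:ℝ)*k*c^2*A*u^3)
  + ((-1/4:ℝ)*k*b*c*D*u^3 + (-23/12:ℝ)*k*b*c*B*u^3 + (-1/2:ℝ)*k*b^2*E*u^3 + (5/6:ℝ)*k*b^2*A*u^3 + (-1/2:ℝ)*b*c^2*B*u^3*v + (-1/12:ℝ)*b^2*c*E*u^3*v + (1/4:ℝ)*b^2*c*A*u^3*v + (1/3:ℝ)*b^3*D*u^3*v + (1/2:ℝ)*b^3*B*u^3*v + (1/2:ℝ)*k*c*C^2*u^3*v)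
  + ((-1/9:ℝ)*k*c*B*D*u^3*v + (-1/2:ℝ)*k*c*B^2*u^3*v + (-1/9:ℝ)*k*c*A*E*u^3*v + (-1/3:ℝ)*k*c*A*C*u^3*v + (-2/3:ℝ)*k*b*C*D*u^3*v + (-4/9:ℝ)*k*b*B*E*u^3*v + (2/3:ℝ)*k*b*B*C*u^3*v + (4/9:ℝ)*k*b*A*D*u^3*v + (-1/4:ℝ)*c^2*B^2*u^3*v^2 + (-1/6:ℝ)*c^2*A*C*u^3*v^2)
  + ((-1/24:ℝ)*b*c*C*D*u^3*v^2 + (-1/6:ℝ)*b*c*B*E*u^3*v^2 + (7/24:ℝ)*b*c*B*C*u^3*v^2 + (1/8:ℝ)*b*c*A*D*u^3*v^2 + (1/12:ℝ)*b^2*D^2*u^3*v^2 + (-1/12:ℝ)*b^2*C*E*u^3*v^2 + (1/3:ℝ)*b^2*B*D*u^3*v^2 + (1/12:ℝ)*b^2*A*E*u^3*v^2 + (1/8:ℝ)*c*C^3*u^3*v^3 + (1/36:ℝ)*c*B*C*D*u^3*v^3)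
  + ((-1/12:ℝ)*c*B^2*E*u^3*v^3 + (-1/72:ℝ)*c*A*D^2*u^3*v^3 + (-1/18:ℝ)*c*A*C*E*u^3*v^3 + (-1/12:ℝ)*b*C^2*D*u^3*v^3 + (1/12:ℝ)*b*B*D^2*u^3*v^3 + (-1/18:ℝ)*b*B*C*E*u^3*v^3 + (1/18:ℝ)*b*A*D*E*u^3*v^3 + (-5/24:ℝ)*b*c^2*A*u^4 + (-1/8:ℝ)*b^2*c*D*u^4 + (-2/3:ℝ)*b^2*c*B*u^4)
  + ((-1/8:ℝ)*b^3*E*u^4 + (1/4:ℝ)*b^3*C*u^4 + (1/3:ℝ)*b^3*A*u^4 + (7/12:ℝ)*k*c*B*C*u^4 + (-1/6:ℝ)*k*c*A*D*u^4 + (-5/12:ℝ)*k*c*A*B*u^4 + (-1/4:ℝ)*k*b*C^2*u^4 + (-5/6:ℝ)*k*b*B*D*u^4 + (1/12:ℝ)*k*b*B^2*u^4 + (-1/6:ℝ)*k*b*A*E*u^4)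
  + ((1/3:ℝ)*k*b*A*C*u^4 + (-5/24:ℝ)*c^2*A*B*u^4*v + (1/8:ℝ)*b*c*C^2*u^4*v + (-7/36:ℝ)*b*c*B*D*u^4*v + (-1/6:ℝ)*b*c*B^2*u^4*v + (-5/72:ℝ)*b*c*A*E*u^4*v + (-1/24:ℝ)*b*c*A*C*u^4*v + (-1/12:ℝ)*b^2*C*D*u^4*v + (-7/36:ℝ)*b^2*B*E*u^4*v + (5/12:ℝ)*b^2*B*C*u^4*v)
  + ((5/18:ℝ)*b^2*A*D*u^4*v + (5/24:ℝ)*c*B*C^2*u^4*v^2 + (-5/72:ℝ)*c*B^2*D*u^4*v^2 + (-5/72:ℝ)*c*A*C*D*u^4*v^2 + (-5/72:ℝ)*c*A*B*E*u^4*v^2 + (-5/72:ℝ)*b*B^2*E*u^4*v^2 + (5/72:ℝ)*b*A*D^2*u^4*v^2 + (-1/24:ℝ)*c^2*A^2*u^5 + (1/8:ℝ)*b*c*B*C*u^5 + (-1/8:ℝ)*b*c*A*D*u^5)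
  + ((-7/24:ℝ)*b*c*A*B*u^5 + (-1/3:ℝ)*b^2*B*D*u^5 + (1/12:ℝ)*b^2*B^2*u^5 + (-1/12:ℝ)*b^2*A*E*u^5 + (1/4:ℝ)*b^2*A*C*u^5 + (1/8:ℝ)*c*B^2*C*u^5*v + (-1/9:ℝ)*c*A*B*D*u^5*v + (-1/72:ℝ)*c*A^2*E*u^5*v + (1/12:ℝ)*b*B*C^2*u^5*v + (-1/12:ℝ)*b*B^2*D*u^5*v)
  + ((1/18:ℝ)*b*A*C*D*u^5*v + (-1/18:ℝ)*b*A*B*E*u^5*v + (1/24:ℝ)*c*B^3*u^6 + (-1/72:ℝ)*c*A*B*C*u^6 + (-1/36:ℝ)*c*A^2*D*u^6 + (1/18:ℝ)*b*B^2*C*u^6 + (1/24:ℝ)*b*A*C^2*u^6 + (-1/12:ℝ)*b*A*B*D*u^6 + (-1/72:ℝ)*b*A^2*E*u^6)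

lemma eqN_decomp (k b c A B C D E u v : ℝ) :
    eqN k b b c A B C D E u v
      = b * v + u ^ 2 * RN2 k b c A B C D E u v + u * v * RN1 k b c A B C D E u v
        + v ^ 2 * RN0 k b c A B C D E u v := by
  unfold eqN RN2 RN1 RN0
  rw [h_u_eq, h_v_eq, h_uu_eq, h_uv_eq]
  ring

lemma eqG_decomp (k b c A B C D E u v : ℝ) :
    c * eqN k b b c A B C D E u v - b * eqM k b b c A B C D E u v
      = (c * B + b * (A - C - 2 * k ^ 3)) / 2 * u ^ 2
        + u ^ 3 * RG3 k b c A B C D E u v + u * v * RG1 k b c A B C D E u v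
        + v ^ 2 * RG0 k b c A B C D E u v := by
  unfold eqN eqM RG3 RG1 RG0
  rw [h_u_eq, h_v_eq, h_uu_eq, h_uv_eq, h_vv_eq]
  ring

lemma eqM_zero (k a b c A B C D E : ℝ) : eqM k a b c A B C D E 0 0 = 0 := by
  unfold eqM
  rw [h_u_eq, h_v_eq, h_uu_eq, h_vv_eq]
  ring

lemma eqN_zero (k a b c A B C D E : ℝ) : eqN k a b c A B C D E 0 0 = 0 := by
  unfold eqN
  rw [h_u_eq, h_v_eq, h_uu_eq, h_uv_eq]
  ring

lemma contRN2 (k b c A B C D E : ℝ) :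
    Continuous (fun x : ℝ × ℝ => RN2 k b c A B C D E x.1 x.2) := by unfold RN2; fun_prop

lemma contRN1 (k b c A B C D E : ℝ) :
    Continuous (fun x : ℝ × ℝ => RN1 k b c A B C D E x.1 x.2) := by unfold RN1; fun_prop

lemma contRN0 (k b c A B C D E : ℝ) :
    Continuous (fun x : ℝ × ℝ => RN0 k b c A B C D E x.1 x.2) := by unfold RN0; fun_prop

lemma contRG3 (k b c A B C D E : ℝ) :
    Continuous (fun x : ℝ × ℝ => RG3 k b c A B C D E x.1 x.2) := by unfold RG3; fun_prop

lemma contRG1 (k b c A B C D E : ℝ) :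
    Continuous (fun x : ℝ × ℝ => RG1 k b c A B C D E x.1 x.2) := by unfold RG1; fun_prop

lemma contRG0 (k b c A B C D E : ℝ) :
    Continuous (fun x : ℝ × ℝ => RG0 k b c A B C D E x.1 x.2) := by unfold RG0; fun_prop

/-- For the `D¹₂,₃` pattern (`a = b ≠ 0`, `c ≠ 0`, `χ = cB + b(A − C − 2k³) ≠ 0`), the
origin is an isolated umbilic point: on some neighborhood `U` of `(0,0)` the only common
zero of `M` and `N` is `(0,0)`. -/
theorem stmt_12 (k a b c A B C D E : ℝ) (ha : a = b) (hb : b ≠ 0) (hc : c ≠ 0)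
    (hchi : c * B + b * (A - C - 2 * k ^ 3) ≠ 0) :
    ∃ U : Set (ℝ × ℝ), U ∈ 𝓝 ((0, 0) : ℝ × ℝ) ∧
      ∀ x ∈ U, (eqM k a b c A B C D E x.1 x.2 = 0 ∧ eqN k a b c A B C D E x.1 x.2 = 0
        ↔ x = (0, 0)) := by
  subst ha
  rename' a => b
  have hF : Continuous (fun x : ℝ × ℝ =>
      |RN2 k b c A B C D E x.1 x.2| + |RN1 k b c A B C D E x.1 x.2|
        + |RN0 k b c A B C D E x.1 x.2| + |RG3 k b c A B C D E x.1 x.2|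
        + |RG1 k b c A B C D E x.1 x.2| + |RG0 k b c A B C D E x.1 x.2|) :=
    (((((contRN2 k b c A B C D E).abs.add (contRN1 k b c A B C D E).abs).add
      (contRN0 k b c A B C D E).abs).add (contRG3 k b c A B C D E).abs).add
      (contRG1 k b c A B C D E).abs).add (contRG0 k b c A B C D E).abs
  set F : ℝ × ℝ → ℝ := fun x =>
      |RN2 k b c A B C D E x.1 x.2| + |RN1 k b c A B C D E x.1 x.2|
        + |RN0 k b c A B C D E x.1 x.2| + |RG3 k b c A B C D E x.1 x.2|
        + |RG1 k b c A B C D E x.1 x.2| + |RG0 k b c A B C D E x.1 x.2| with hFdef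
  have hF00 : 0 ≤ F (0, 0) := by rw [hFdef]; positivity
  set K : ℝ := F (0, 0) + 1 with hKdef
  have hKpos : (0 : ℝ) < K := by rw [hKdef]; linarith
  have hK1 : (1 : ℝ) ≤ K := by rw [hKdef]; linarith
  have hbpos : (0 : ℝ) < |b| := abs_pos.mpr hb
  set χ : ℝ := c * B + b * (A - C - 2 * k ^ 3) with hχdef
  have hχpos : (0 : ℝ) < |χ| := abs_pos.mpr hchi
  set Kc : ℝ := K * (|b| ^ 2 + 2 * K * |b| + 4 * K ^ 2) with hKcdef
  have hKcpos : (0 : ℝ) < Kc := by rw [hKcdef]; positivity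
  set δ : ℝ := |χ| * |b| ^ 2 / (2 * Kc) with hδdef
  have hδpos : (0 : ℝ) < δ := by rw [hδdef]; positivity
  set ε : ℝ := min 1 (|b| / (4 * K)) with hεdef
  have hεpos : (0 : ℝ) < ε := lt_min one_pos (by positivity)
  have hε1 : ε ≤ 1 := min_le_left _ _
  have hKε : K * ε ≤ |b| / 4 := by
    have h := min_le_right 1 (|b| / (4 * K))
    calc K * ε ≤ K * (|b| / (4 * K)) := mul_le_mul_of_nonneg_left h (le_of_lt hKpos)
      _ = |b| / 4 := by field_simp
  have hKcδ : Kc * δ = |χ| * |b| ^ 2 / 2 := by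
    rw [hδdef]
    field_simp
  have hFev : ∀ᶠ x : ℝ × ℝ in 𝓝 (0, 0), F x ≤ K := by
    have h1 : Set.Iio K ∈ 𝓝 (F (0, 0)) := Iio_mem_nhds (by rw [hKdef]; linarith)
    filter_upwards [hF.continuousAt h1] with x hx
    exact le_of_lt hx
  have hball : ∀ᶠ x : ℝ × ℝ in 𝓝 (0, 0), |x.1| < δ ∧ |x.1| ≤ ε ∧ |x.2| ≤ ε := by
    filter_upwards [Metric.ball_mem_nhds ((0, 0) : ℝ × ℝ) (lt_min hδpos hεpos)] with x hx
    rw [Metric.mem_ball, Prod.dist_eq] at hx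
    have h1 : dist x.1 (0 : ℝ) < min δ ε := lt_of_le_of_lt (le_max_left _ _) hx
    have h2 : dist x.2 (0 : ℝ) < min δ ε := lt_of_le_of_lt (le_max_right _ _) hx
    rw [Real.dist_eq, sub_zero] at h1 h2
    exact ⟨lt_of_lt_of_le h1 (min_le_left _ _),
      le_of_lt (lt_of_lt_of_le h1 (min_le_right _ _)),
      le_of_lt (lt_of_lt_of_le h2 (min_le_right _ _))⟩
  clear_value F K χ Kc δ ε
  have hmain : ∀ᶠ x : ℝ × ℝ in 𝓝 (0, 0),
      (eqM k b b c A B C D E x.1 x.2 = 0 ∧ eqN k b b c A B C D E x.1 x.2 = 0 ↔ x = (0, 0)) := by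
    filter_upwards [hFev, hball] with x hFx hx
    obtain ⟨u, v⟩ := x
    simp only at hFx hx ⊢
    constructor
    · rintro ⟨hM, hN⟩
      set n2 := RN2 k b c A B C D E u v with hn2def
      set n1 := RN1 k b c A B C D E u v with hn1def
      set n0 := RN0 k b c A B C D E u v with hn0def
      set g3 := RG3 k b c A B C D E u v with hg3def
      set g1 := RG1 k b c A B C D E u v with hg1def
      set g0 := RG0 k b c A B C D E u v with hg0def
      have hFx' : |n2| + |n1| + |n0| + |g3| + |g1| + |g0| ≤ K := by
        rw [hFdef] at hFx; exact hFx
      have an2 := abs_nonneg n2; have an1 := abs_nonneg n1; have an0 := abs_nonneg n0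
      have ag3 := abs_nonneg g3; have ag1 := abs_nonneg g1; have ag0 := abs_nonneg g0
      have bn2 : |n2| ≤ K := by linarith
      have bn1 : |n1| ≤ K := by linarith
      have bn0 : |n0| ≤ K := by linarith
      have bg3 : |g3| ≤ K := by linarith
      have bg1 : |g1| ≤ K := by linarith
      have bg0 : |g0| ≤ K := by linarith
      clear_value n2 n1 n0 g3 g1 g0
      have hNd := eqN_decomp k b c A B C D E u v
      rw [hN, ← hn2def, ← hn1def, ← hn0def] at hNd
      have hGd := eqG_decomp k b c A B C D E u v
      rw [hM, hN, ← hg3def, ← hg1def, ← hg0def] at hGd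
      rw [← hχdef] at hGd
      have hGd' : (0 : ℝ) = χ / 2 * u ^ 2 + u ^ 3 * g3 + u * v * g1 + v ^ 2 * g0 := by
        linarith [hGd]
      have habs_u2 : |u ^ 2| = u ^ 2 := by rw [abs_pow, sq_abs]
      have habs_v2 : |v ^ 2| = v ^ 2 := by rw [abs_pow, sq_abs]
      -- Step 1
      have h1 : |b| * |v| ≤ K * u ^ 2 + K * (|u| * |v|) + K * v ^ 2 := by
        have e : b * v = -(u ^ 2 * n2 + u * v * n1 + v ^ 2 * n0) := by linarith [hNd]
        have e2 : |b| * |v| = |u ^ 2 * n2 + u * v * n1 + v ^ 2 * n0| := by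
          rw [← abs_mul, e, abs_neg]
        rw [e2]
        have t := abs_add_three (u ^ 2 * n2) (u * v * n1) (v ^ 2 * n0)
        have b2 : |u ^ 2 * n2| ≤ K * u ^ 2 := by
          rw [abs_mul, habs_u2, mul_comm]
          exact mul_le_mul_of_nonneg_right bn2 (sq_nonneg u)
        have b1 : |u * v * n1| ≤ K * (|u| * |v|) := by
          rw [abs_mul, abs_mul, mul_comm]
          exact mul_le_mul_of_nonneg_right bn1 (by positivity)
        have b0 : |v ^ 2 * n0| ≤ K * v ^ 2 := by
          rw [abs_mul, habs_v2, mul_comm]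
          exact mul_le_mul_of_nonneg_right bn0 (sq_nonneg v)
        linarith
      -- Step 2
      have h2 : |b| * |v| ≤ 2 * K * u ^ 2 := by
        have huv : |u| * |v| ≤ ε * |v| := mul_le_mul_of_nonneg_right hx.2.1 (abs_nonneg v)
        have hvv : v ^ 2 ≤ ε * |v| := by
          rw [← sq_abs, sq]
          exact mul_le_mul_of_nonneg_right hx.2.2 (abs_nonneg v)
        have t1 : K * (|u| * |v|) ≤ |b| / 4 * |v| := by
          calc K * (|u| * |v|) ≤ K * (ε * |v|) := mul_le_mul_of_nonneg_left huv (le_of_lt hKpos)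
            _ = (K * ε) * |v| := by ring
            _ ≤ |b| / 4 * |v| := mul_le_mul_of_nonneg_right hKε (abs_nonneg v)
        have t2 : K * v ^ 2 ≤ |b| / 4 * |v| := by
          calc K * v ^ 2 ≤ K * (ε * |v|) := mul_le_mul_of_nonneg_left hvv (le_of_lt hKpos)
            _ = (K * ε) * |v| := by ring
            _ ≤ |b| / 4 * |v| := mul_le_mul_of_nonneg_right hKε (abs_nonneg v)
        linarith
      -- Step 3
      have h3 : |χ| / 2 * u ^ 2 ≤ K * |u| ^ 3 + K * (|u| * |v|) + K * v ^ 2 := by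
        have e : χ / 2 * u ^ 2 = -(u ^ 3 * g3 + u * v * g1 + v ^ 2 * g0) := by
          linarith [hGd']
        have e2 : |χ| / 2 * u ^ 2 = |u ^ 3 * g3 + u * v * g1 + v ^ 2 * g0| := by
          calc |χ| / 2 * u ^ 2 = |χ / 2 * u ^ 2| := by
                rw [abs_mul, abs_div, abs_two, habs_u2]
            _ = |u ^ 3 * g3 + u * v * g1 + v ^ 2 * g0| := by rw [e, abs_neg]
        rw [e2]
        have t := abs_add_three (u ^ 3 * g3) (u * v * g1) (v ^ 2 * g0)
        have b3 : |u ^ 3 * g3| ≤ K * |u| ^ 3 := by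
          rw [abs_mul, abs_pow, mul_comm]
          exact mul_le_mul_of_nonneg_right bg3 (by positivity)
        have b1 : |u * v * g1| ≤ K * (|u| * |v|) := by
          rw [abs_mul, abs_mul, mul_comm]
          exact mul_le_mul_of_nonneg_right bg1 (by positivity)
        have b0 : |v ^ 2 * g0| ≤ K * v ^ 2 := by
          rw [abs_mul, habs_v2, mul_comm]
          exact mul_le_mul_of_nonneg_right bg0 (sq_nonneg v)
        linarith
      -- u = 0
      have hu0 : u = 0 := by
        by_contra hu0
        have hu2pos : (0 : ℝ) < u ^ 2 := by positivity
        have habs3 : |u| ^ 3 = |u| * u ^ 2 := by rw [← sq_abs]; ring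
        have hu1 : |u| ≤ 1 := le_trans hx.2.1 hε1
        have m1 : |b| ^ 2 * (|u| * |v|) ≤ 2 * K * |b| * (|u| * u ^ 2) := by
          have h' := mul_le_mul_of_nonneg_left h2 (by positivity : (0:ℝ) ≤ |b| * |u|)
          calc |b| ^ 2 * (|u| * |v|) = |b| * |u| * (|b| * |v|) := by ring
            _ ≤ |b| * |u| * (2 * K * u ^ 2) := h'
            _ = 2 * K * |b| * (|u| * u ^ 2) := by ring
        have m2 : |b| ^ 2 * v ^ 2 ≤ 4 * K ^ 2 * (|u| * u ^ 2) := by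
          have h' := mul_self_le_mul_self (by positivity : (0:ℝ) ≤ |b| * |v|) h2
          have h5 : |u| ^ 2 ≤ |u| := by
            calc |u| ^ 2 = |u| * |u| := sq (|u|)
              _ ≤ 1 * |u| := mul_le_mul_of_nonneg_right hu1 (abs_nonneg u)
              _ = |u| := one_mul _
          have h6 : u ^ 2 * u ^ 2 ≤ |u| * u ^ 2 := by
            have e : u ^ 2 * u ^ 2 = |u| ^ 2 * u ^ 2 := by rw [sq_abs]
            rw [e]
            exact mul_le_mul_of_nonneg_right h5 (sq_nonneg u)
          calc |b| ^ 2 * v ^ 2 = (|b| * |v|) * (|b| * |v|) := by rw [← sq_abs v]; ring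
            _ ≤ (2 * K * u ^ 2) * (2 * K * u ^ 2) := h'
            _ = 4 * K ^ 2 * (u ^ 2 * u ^ 2) := by ring
            _ ≤ 4 * K ^ 2 * (|u| * u ^ 2) := mul_le_mul_of_nonneg_left h6 (by positivity)
        have t := mul_le_mul_of_nonneg_left h3 (sq_nonneg |b|)
        have s1 := mul_le_mul_of_nonneg_left m1 (le_of_lt hKpos)
        have s2 := mul_le_mul_of_nonneg_left m2 (le_of_lt hKpos)
        have habs3' : K * (|b| ^ 2 * |u| ^ 3) = K * (|b| ^ 2 * (|u| * u ^ 2)) := by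
          rw [habs3]
        have hfin : |χ| / 2 * |b| ^ 2 * u ^ 2 ≤ Kc * (|u| * u ^ 2) := by
          rw [hKcdef]
          linarith only [t, s1, s2, habs3']
        have hlt : Kc * |u| < |χ| * |b| ^ 2 / 2 := by
          rw [← hKcδ]
          exact mul_lt_mul_of_pos_left hx.1 hKcpos
        have hlt2 := mul_lt_mul_of_pos_right hlt hu2pos
        linarith only [hfin, hlt2]
      -- v = 0
      have hv0 : v = 0 := by
        rw [hu0] at h2
        simp only [ne_eq, OfNat.ofNat_ne_zero, not_false_eq_true, zero_pow, mul_zero] at h2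
        have h7 : |v| ≤ 0 := by
          by_contra h7
          push_neg at h7
          have := mul_pos hbpos h7
          linarith only [h2, this]
        exact abs_eq_zero.mp (le_antisymm h7 (abs_nonneg v))
      simp [hu0, hv0]
    · intro hx0
      rw [Prod.mk.injEq] at hx0
      rw [hx0.1, hx0.2]
      exact ⟨eqM_zero k b b c A B C D E, eqN_zero k b b c A B C D E⟩
  rcases hmain.exists_mem with ⟨U, hU, hUP⟩
  exact ⟨U, hU, fun x hx => hUP x hx⟩
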